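/- Let f : [0,1] → S¹ be f(x) = exp(2πix) and g : [0,1] → S¹ be g(y) = exp(πi(2y+1)). Suppose W is a nonempty topological space and r, s : W → [0,1] are continuous surjections with f ∘ r = g ∘ s. Then W is disconnected. -/

import Mathlib

/-!
From `f (r w) = g (s w)` one gets `r w - s w ∈ 1/2 + ℤ`, hence `r w - s w = ±1/2` since both lie in
`[0, 1]`. The continuous function `r - s` is `≤ 0` where `r = 0` and `≥ 0` where `r = 1`, so on a
connected space it would vanish somewhere by the intermediate value theorem.
-/

open Complex Real

theorem exists_int_sub_eq_of_exp_eq {x y : ℝ}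
    (h : exp (2 * π * I * x) = exp (π * I * (2 * y + 1))) :
    ∃ n : ℤ, x - y = 1 / 2 + n := by
  obtain ⟨n, hn⟩ := Complex.exp_eq_exp_iff_exists_int.mp h
  refine ⟨n, ?_⟩
  have hπI : (π : ℂ) * I ≠ 0 := mul_ne_zero (ofReal_ne_zero.mpr pi_ne_zero) I_ne_zero
  have hC : (π : ℂ) * I * (2 * x) = π * I * (2 * y + 1 + 2 * n) := by
    linear_combination hn
  apply ofReal_injective
  push_cast
  linear_combination (mul_left_cancel₀ hπI hC) / 2

theorem sub_eq_half_or_neg_half_of_exp_eq {x y : ℝ} (hx : x ∈ Set.Icc (0 : ℝ) 1)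
    (hy : y ∈ Set.Icc (0 : ℝ) 1) (h : exp (2 * π * I * x) = exp (π * I * (2 * y + 1))) :
    x - y = 1 / 2 ∨ x - y = -(1 / 2) := by
  obtain ⟨n, hn⟩ := exists_int_sub_eq_of_exp_eq h
  obtain ⟨hx0, hx1⟩ := hx
  obtain ⟨hy0, hy1⟩ := hy
  have hn_lo : -2 < n := by exact_mod_cast (show (-2 : ℝ) < n by linarith)
  have hn_hi : n < 1 := by exact_mod_cast (show (n : ℝ) < 1 by linarith)
  interval_cases n
  · right; push_cast at hn; linarith
  · left; simpa using hn

theorem no_amalgamation_circle_general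
    (W : Type*) [TopologicalSpace W]
    (r s : W → Set.Icc (0 : ℝ) 1)
    (hr : Continuous r) (hs : Continuous s)
    (hrsurj : Function.Surjective r)
    (hcomm : ∀ w, Complex.exp (2 * Real.pi * Complex.I * (r w : ℝ))
      = Complex.exp (Real.pi * Complex.I * (2 * (s w : ℝ) + 1))) :
    ¬ ConnectedSpace W := by
  intro hW
  set d : W → ℝ := fun w ↦ (r w : ℝ) - s w with hd_def
  have hd : ∀ w, d w = 1 / 2 ∨ d w = -(1 / 2) := fun w ↦
    sub_eq_half_or_neg_half_of_exp_eq (r w).2 (s w).2 (hcomm w)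
  have hd_cont : Continuous d := by fun_prop
  obtain ⟨w₀, hw₀⟩ := hrsurj ⟨0, by norm_num⟩
  obtain ⟨w₁, hw₁⟩ := hrsurj ⟨1, by norm_num⟩
  have hd₀ : d w₀ ≤ 0 := by simp only [hd_def, hw₀]; linarith [(s w₀).2.1]
  have hd₁ : 0 ≤ d w₁ := by simp only [hd_def, hw₁]; linarith [(s w₁).2.2]
  obtain ⟨w, hw⟩ := intermediate_value_univ w₀ w₁ hd_cont ⟨hd₀, hd₁⟩
  rcases hd w with h | h <;> rw [hw] at h <;> norm_num at h

theorem no_amalgamation_circle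
    (W : Type*) [TopologicalSpace W] [Nonempty W]
    (r s : W → Set.Icc (0 : ℝ) 1)
    (hr : Continuous r) (hs : Continuous s)
    (hrsurj : Function.Surjective r) (hssurj : Function.Surjective s)
    (hcomm : ∀ w, Complex.exp (2 * Real.pi * Complex.I * (r w : ℝ))
      = Complex.exp (Real.pi * Complex.I * (2 * (s w : ℝ) + 1))) :
    ¬ ConnectedSpace W :=
  no_amalgamation_circle_general W r s hr hs hrsurj hcomm
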